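/- arXiv:2105.07707 — 3 statements merged into one kernel-verified Lean document; each statement's English description precedes it below -/
import Mathlib

section
/- The support of φ₁ equals [0,2]×[0,1]×[0,1], and for n ≥ 2 the support of φₙ is contained in [0,2n]×[0,n]×[−½(n+2)(n−1), ½(n+1)(n+2)−2]. -/
open MeasureTheory

/-- Heisenberg group multiplication on ℝ³. -/
noncomputable def Hmul (a b : ℝ × ℝ × ℝ) : ℝ × ℝ × ℝ :=
  (a.1 + b.1, a.2.1 + b.2.1, a.2.2 + b.2.2 + (b.1 * a.2.1 - b.2.1 * a.1) / 2)

/-- Heisenberg group inverse. -/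
noncomputable def Hinv (a : ℝ × ℝ × ℝ) : ℝ × ℝ × ℝ := (-a.1, -a.2.1, -a.2.2)

/-- Group convolution on the Heisenberg group. -/
noncomputable def Hconv (f g : ℝ × ℝ × ℝ → ℝ) : ℝ × ℝ × ℝ → ℝ :=
  fun p => ∫ q : ℝ × ℝ × ℝ, f (Hmul p (Hinv q)) * g q

/-- The fundamental domain Q = [0,2]×[0,1]×[0,1]. -/
noncomputable def Q : Set (ℝ × ℝ × ℝ) :=
  Set.Icc (0 : ℝ) 2 ×ˢ Set.Icc (0 : ℝ) 1 ×ˢ Set.Icc (0 : ℝ) 1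

/-- The B-splines on the Heisenberg group: φ₁ = (1/√2)·χ_Q, φₙ = φₙ₋₁ * φ₁. -/
noncomputable def phi : ℕ → (ℝ × ℝ × ℝ → ℝ)
  | 0 => fun _ => 0
  | 1 => fun p => Q.indicator (fun _ => (Real.sqrt 2)⁻¹) p
  | (n + 2) => Hconv (phi (n + 1)) (phi 1)

/-- Left translation on the Heisenberg group. -/
noncomputable def Ltr (a : ℝ × ℝ × ℝ) (f : ℝ × ℝ × ℝ → ℝ) : ℝ × ℝ × ℝ → ℝ :=
  fun p => f (Hmul (Hinv a) p)

lemma conv_support (f g : ℝ × ℝ × ℝ → ℝ) :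
    Function.support (Hconv f g) ⊆
      {p | ∃ q, f (Hmul p (Hinv q)) ≠ 0 ∧ g q ≠ 0} := by
  intro p hp
  by_contra h
  simp only [Set.mem_setOf_eq, not_exists, not_and, not_not] at h
  apply hp
  show (∫ q : ℝ × ℝ × ℝ, f (Hmul p (Hinv q)) * g q) = 0
  have : (fun q : ℝ × ℝ × ℝ => f (Hmul p (Hinv q)) * g q) = fun _ => 0 := by
    funext q
    by_cases hf : f (Hmul p (Hinv q)) = 0
    · simp [hf]
    · simp [h q hf]
  rw [this, integral_zero]

lemma support_phi1 : Function.support (phi 1) = Q := by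
  rw [phi.eq_2, Set.support_indicator]
  rw [Function.support_const (inv_ne_zero (by positivity : Real.sqrt 2 ≠ 0))]
  exact Set.inter_univ Q

lemma key : ∀ n : ℕ,
    Function.support (phi (n + 1)) ⊆
      Set.Icc (0 : ℝ) (2 * ((n : ℝ) + 1)) ×ˢ Set.Icc (0 : ℝ) ((n : ℝ) + 1) ×ˢ
        Set.Icc (-((((n : ℝ) + 1) + 2) * (((n : ℝ) + 1) - 1) / 2))
          ((((n : ℝ) + 1) + 1) * (((n : ℝ) + 1) + 2) / 2 - 2) := by
  intro n
  induction n with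
  | zero =>
      rw [support_phi1]
      intro p hp
      simp only [Q, Set.mem_prod, Set.mem_Icc] at hp ⊢
      obtain ⟨⟨a, b⟩, ⟨c, d⟩, e, f⟩ := hp
      refine ⟨⟨?_, ?_⟩, ⟨?_, ?_⟩, ?_, ?_⟩ <;> push_cast <;> linarith
  | succ m ih =>
      intro p hp
      have hp' : p ∈ Function.support (Hconv (phi (m + 1)) (phi 1)) := by
        have e : phi (m + 1 + 1) = Hconv (phi (m + 1)) (phi 1) := by
          rw [phi.eq_3, phi.eq_2]
        rwa [e] at hp
      obtain ⟨q, hf, hg⟩ := conv_support _ _ hp'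
      have hq : q ∈ Q := by
        rw [← support_phi1]; exact hg
      have hm := ih hf
      obtain ⟨x, y, t⟩ := p
      obtain ⟨u, v, s⟩ := q
      simp only [Q, Set.mem_prod, Set.mem_Icc, Hmul, Hinv] at hq hm ⊢
      obtain ⟨⟨hu0, hu2⟩, ⟨hv0, hv1⟩, hs0, hs1⟩ := hq
      obtain ⟨⟨h10, h12⟩, ⟨h20, h22⟩, h30, h32⟩ := hm
      push_cast
      refine ⟨⟨by linarith, by linarith⟩, ⟨by linarith, by linarith⟩, ?_, ?_⟩
      · nlinarith [mul_nonneg hv0 (by linarith : (0:ℝ) ≤ x),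
          mul_nonneg hu0 (by linarith : (0:ℝ) ≤ y),
          mul_nonneg (by linarith : (0:ℝ) ≤ 2 - u) (by linarith : (0:ℝ) ≤ y),
          mul_nonneg (by linarith : (0:ℝ) ≤ 1 - v) (by linarith : (0:ℝ) ≤ x)]
      · nlinarith [mul_nonneg hv0 (by linarith : (0:ℝ) ≤ x),
          mul_nonneg hu0 (by linarith : (0:ℝ) ≤ y),
          mul_nonneg (by linarith : (0:ℝ) ≤ 2 - u) (by linarith : (0:ℝ) ≤ y),
          mul_nonneg (by linarith : (0:ℝ) ≤ 1 - v) (by linarith : (0:ℝ) ≤ x)]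

theorem support_phi :
    Function.support (phi 1) = Q ∧
    ∀ n : ℕ, 2 ≤ n →
      Function.support (phi n) ⊆
        Set.Icc (0 : ℝ) (2 * n) ×ˢ Set.Icc (0 : ℝ) (n : ℝ) ×ˢ
          Set.Icc (-(((n : ℝ) + 2) * ((n : ℝ) - 1) / 2))
            (((n : ℝ) + 1) * ((n : ℝ) + 2) / 2 - 2) := by
  refine ⟨support_phi1, fun n hn => ?_⟩
  obtain ⟨m, rfl⟩ := Nat.exists_eq_add_of_le hn
  have h := key (m + 1)
  rw [show m + 1 + 1 = 2 + m by ring] at h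
  push_cast at h ⊢
  ring_nf at h ⊢
  exact h
end

section
/- There does not exist a real number α such that L_{(−2,−1,−α)}φ₂(x,y,t) = L_{(−2,−1,−α)}φ₂(−x,−y,−t) for all (x,y,t) ∈ ℝ³; i.e., the second order Heisenberg B-spline admits no symmetry center of this form. -/
open MeasureTheory

/-!
Since `φ₂ = φ₁ * φ₁` with `φ₁` a multiple of `χ_Q`, `φ₂(p)` is half the volume of the set of
`q ∈ Q` with `p q⁻¹ ∈ Q`. A symmetry centre `(2, 1, α)` would force
`φ₂(3, 1, τ) = φ₂(1, 1, 2α - τ)` for all `τ`. Over the point `(1, 1)` the spline vanishes outside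
`[-1/2, 5/2]`, whereas `φ₂(3, 1, -3/4)` and `φ₂(3, 1, 11/4)` are positive; hence
`2α + 3/4 ≤ 5/2` and `2α - 11/4 ≥ -1/2`, i.e. `9/8 ≤ α ≤ 7/8`.
-/

open Set

def overlap (p : ℝ × ℝ × ℝ) : Set (ℝ × ℝ × ℝ) := Q ∩ {q | Hmul p (Hinv q) ∈ Q}

lemma isCompact_Q : IsCompact Q :=
  isCompact_Icc.prod (isCompact_Icc.prod isCompact_Icc)

lemma measurableSet_overlap (p : ℝ × ℝ × ℝ) : MeasurableSet (overlap p) := by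
  have hQ : MeasurableSet Q := isCompact_Q.isClosed.measurableSet
  have hcont : Continuous fun q : ℝ × ℝ × ℝ => Hmul p (Hinv q) := by
    unfold Hmul Hinv; fun_prop
  exact hQ.inter (hcont.measurable hQ)

lemma phi_one_mul_phi_one_eq_indicator_overlap (p q : ℝ × ℝ × ℝ) :
    phi 1 (Hmul p (Hinv q)) * phi 1 q = (overlap p).indicator (fun _ => (2 : ℝ)⁻¹) q := by
  have hsq : (√2)⁻¹ * (√2)⁻¹ = (2 : ℝ)⁻¹ := by
    rw [← mul_inv, Real.mul_self_sqrt zero_le_two]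
  by_cases h₁ : Hmul p (Hinv q) ∈ Q <;> by_cases h₂ : q ∈ Q <;>
    simp [phi, overlap, h₁, h₂, hsq]

lemma phi_two_eq_measureReal_overlap (p : ℝ × ℝ × ℝ) :
    phi 2 p = volume.real (overlap p) / 2 := by
  rw [show phi 2 = Hconv (phi 1) (phi 1) from phi.eq_3 0, Hconv]
  simp_rw [phi_one_mul_phi_one_eq_indicator_overlap,
    integral_indicator_const _ (measurableSet_overlap p), smul_eq_mul, div_eq_mul_inv]

lemma phi_two_pos_of_Ioo_prod_subset {p : ℝ × ℝ × ℝ} {a₁ b₁ a₂ b₂ a₃ b₃ : ℝ}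
    (h₁ : a₁ < b₁) (h₂ : a₂ < b₂) (h₃ : a₃ < b₃)
    (hsub : Ioo a₁ b₁ ×ˢ Ioo a₂ b₂ ×ˢ Ioo a₃ b₃ ⊆ overlap p) :
    0 < phi 2 p := by
  have hopen : IsOpen (Ioo a₁ b₁ ×ˢ Ioo a₂ b₂ ×ˢ Ioo a₃ b₃) :=
    isOpen_Ioo.prod (isOpen_Ioo.prod isOpen_Ioo)
  have hne : (Ioo a₁ b₁ ×ˢ Ioo a₂ b₂ ×ˢ Ioo a₃ b₃).Nonempty :=
    (nonempty_Ioo.2 h₁).prod ((nonempty_Ioo.2 h₂).prod (nonempty_Ioo.2 h₃))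
  have hfin : volume (overlap p) ≠ ⊤ :=
    (measure_mono inter_subset_left).trans_lt isCompact_Q.measure_lt_top |>.ne
  rw [phi_two_eq_measureReal_overlap]
  exact half_pos <| ENNReal.toReal_pos
    ((hopen.measure_pos volume hne).trans_le (measure_mono hsub)).ne' hfin

lemma phi_two_one_one_eq_zero {σ : ℝ} (hσ : σ < -(1 / 2) ∨ 5 / 2 < σ) : phi 2 (1, 1, σ) = 0 := by
  have hempty : overlap (1, 1, σ) = ∅ := by
    refine eq_empty_of_forall_notMem fun ⟨u, v, s⟩ ⟨hq, hpq⟩ => ?_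
    simp only [Q, Hmul, Hinv, mem_prod, mem_Icc, mem_ofPred_eq] at hq hpq
    rcases hσ with hσ | hσ <;> nlinarith
  simp [phi_two_eq_measureReal_overlap, hempty]

-- The box is a corner of `Q` at `q = (1, 1, 0)`, where `p q⁻¹ = (2, 0, 1/4) ∈ Q`.
lemma phi_two_pos_at_three_one_neg_three_div_four : 0 < phi 2 (3, 1, -(3 / 4)) := by
  refine phi_two_pos_of_Ioo_prod_subset (a₁ := 1) (b₁ := 11 / 10) (a₂ := 9 / 10) (b₂ := 1)
    (a₃ := 0) (b₃ := 1 / 20) (by norm_num) (by norm_num) (by norm_num) ?_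
  rintro ⟨u, v, s⟩ ⟨⟨hu₁, hu₂⟩, ⟨hv₁, hv₂⟩, ⟨hs₁, hs₂⟩⟩
  simp only [overlap, Q, Hmul, Hinv, mem_inter_iff, mem_ofPred_eq, mem_prod, mem_Icc]
  refine ⟨⟨⟨?_, ?_⟩, ⟨?_, ?_⟩, ?_, ?_⟩, ⟨?_, ?_⟩, ⟨?_, ?_⟩, ?_, ?_⟩ <;> nlinarith

-- The box is a corner of `Q` at `q = (2, 0, 1)`, where `p q⁻¹ = (1, 1, 3/4) ∈ Q`.
lemma phi_two_pos_at_three_one_eleven_div_four : 0 < phi 2 (3, 1, 11 / 4) := by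
  refine phi_two_pos_of_Ioo_prod_subset (a₁ := 19 / 10) (b₁ := 2) (a₂ := 0) (b₂ := 1 / 20)
    (a₃ := 19 / 20) (b₃ := 1) (by norm_num) (by norm_num) (by norm_num) ?_
  rintro ⟨u, v, s⟩ ⟨⟨hu₁, hu₂⟩, ⟨hv₁, hv₂⟩, ⟨hs₁, hs₂⟩⟩
  simp only [overlap, Q, Hmul, Hinv, mem_inter_iff, mem_ofPred_eq, mem_prod, mem_Icc]
  refine ⟨⟨⟨?_, ?_⟩, ⟨?_, ?_⟩, ?_, ?_⟩, ⟨?_, ?_⟩, ⟨?_, ?_⟩, ?_, ?_⟩ <;> nlinarith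

lemma phi_two_three_one_eq_of_symmetric {α : ℝ}
    (h : ∀ x y t : ℝ, Ltr (-2, -1, -α) (phi 2) (x, y, t) = Ltr (-2, -1, -α) (phi 2) (-x, -y, -t))
    (τ : ℝ) : phi 2 (3, 1, τ) = phi 2 (1, 1, 2 * α - τ) := by
  convert h 1 0 (τ - α - 1 / 2) using 2 <;> simp only [Ltr, Hmul, Hinv] <;> congr 1 <;> ext <;>
    norm_num <;> ring

theorem no_symmetry_center :
    ¬ ∃ α : ℝ, ∀ x y t : ℝ,
        Ltr (-2, -1, -α) (phi 2) (x, y, t) =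
          Ltr (-2, -1, -α) (phi 2) (-x, -y, -t) := by
  rintro ⟨α, h⟩
  have hα_le : 2 * α + 3 / 4 ≤ 5 / 2 := by
    by_contra! hlt
    have := phi_two_three_one_eq_of_symmetric h (-(3 / 4))
    rw [sub_neg_eq_add, phi_two_one_one_eq_zero (.inr hlt)] at this
    exact phi_two_pos_at_three_one_neg_three_div_four.ne' this
  have hα_ge : -(1 / 2) ≤ 2 * α - 11 / 4 := by
    by_contra! hlt
    have := phi_two_three_one_eq_of_symmetric h (11 / 4)
    rw [phi_two_one_one_eq_zero (.inl hlt)] at this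
    exact phi_two_pos_at_three_one_eleven_div_four.ne' this
  linarith
end

section
/- The system {L_{(2k,l,m)}φ₁ : k,l,m ∈ ℤ} is an orthonormal system in L²(ℝ³): ⟨L_{(2k,l,m)}φ₁, L_{(2k',l',m')}φ₁⟩ = δ_{k,k'} δ_{l,l'} δ_{m,m'}. -/
open MeasureTheory

/-!
Left translation by `(u, v, s)` is a translation composed with a shear of the last coordinate,
so it preserves Lebesgue measure, and `L_a φ₁ · L_{a'} φ₁ = ½ · χ_{aQ ∩ a'Q}`. For `a = a'` the
integral is `½ · |Q| = 1`. For distinct lattice points the tiles meet in a null set: if the first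
(or second) coordinates differ, they differ by a nonzero multiple of the side length `2` (or `1`),
so the corresponding coordinate intervals meet in at most one point; if only the last coordinates
differ, the shear `a⁻¹ ·` turns the overlap into one of the same kind in the `t`-coordinate.
-/

open Set

lemma measurePreserving_add_shear (u v : ℝ) (g : ℝ → ℝ → ℝ)
    (hg : Measurable (Function.uncurry g)) :
    MeasurePreserving (fun p : ℝ × ℝ × ℝ => (p.1 + u, p.2.1 + v, p.2.2 + g p.1 p.2.1))
      volume volume := by
  have fiber (x : ℝ) :
      MeasurePreserving (fun q : ℝ × ℝ => (q.1 + v, q.2 + g x q.1)) volume volume := by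
    rw [Measure.volume_eq_prod]
    exact (measurePreserving_add_right volume v).skew_product (g := fun y t => t + g x y)
      (by fun_prop) (ae_of_all _ fun y => (measurePreserving_add_right volume (g x y)).map_eq)
  rw [Measure.volume_eq_prod]
  exact (measurePreserving_add_right volume u).skew_product
    (g := fun x (q : ℝ × ℝ) => (q.1 + v, q.2 + g x q.1))
    (by fun_prop) (ae_of_all _ fun x => (fiber x).map_eq)

lemma hmul_hinv_apply (u v s : ℝ) (p : ℝ × ℝ × ℝ) :
    Hmul (Hinv (u, v, s)) p = (p.1 - u, p.2.1 - v, p.2.2 - s + (u * p.2.1 - v * p.1) / 2) := by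
  simp only [Hmul, Hinv]
  ring_nf

lemma measurePreserving_hmul_hinv (a : ℝ × ℝ × ℝ) :
    MeasurePreserving (Hmul (Hinv a) ·) volume volume := by
  obtain ⟨u, v, s⟩ := a
  convert measurePreserving_add_shear (-u) (-v) (fun x y => -s + (u * y - v * x) / 2)
    (by fun_prop) using 2 with p
  rw [hmul_hinv_apply]
  ext <;> simp only <;> ring

lemma measurableSet_Q : MeasurableSet Q :=
  measurableSet_Icc.prod (measurableSet_Icc.prod measurableSet_Icc)

lemma volume_Q : volume Q = 2 := by
  simp only [Q, Measure.volume_eq_prod, Measure.prod_prod, Real.volume_Icc]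
  norm_num

def tile (a : ℝ × ℝ × ℝ) : Set (ℝ × ℝ × ℝ) := (Hmul (Hinv a) ·) ⁻¹' Q

lemma mem_tile_iff {u v s : ℝ} {p : ℝ × ℝ × ℝ} :
    p ∈ tile (u, v, s) ↔ p.1 - u ∈ Icc 0 2 ∧ p.2.1 - v ∈ Icc 0 1 ∧
      p.2.2 - s + (u * p.2.1 - v * p.1) / 2 ∈ Icc 0 1 := by
  rw [tile, mem_preimage, hmul_hinv_apply]
  rfl

lemma measurableSet_tile (a : ℝ × ℝ × ℝ) : MeasurableSet (tile a) :=
  (measurePreserving_hmul_hinv a).measurable measurableSet_Q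

lemma measureReal_tile (a : ℝ × ℝ × ℝ) : volume.real (tile a) = 2 := by
  rw [tile, (measurePreserving_hmul_hinv a).measureReal_preimage
    measurableSet_Q.nullMeasurableSet, measureReal_def, volume_Q]
  norm_num

lemma Ltr_phi_one (a : ℝ × ℝ × ℝ) :
    Ltr a (phi 1) = (tile a).indicator fun _ => (Real.sqrt 2)⁻¹ := by
  ext p
  rw [Ltr, phi]
  rfl

lemma integral_Ltr_phi_one_mul (a a' : ℝ × ℝ × ℝ) :
    ∫ p, Ltr a (phi 1) p * Ltr a' (phi 1) p = volume.real (tile a ∩ tile a') / 2 := by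
  simp_rw [Ltr_phi_one, ← inter_indicator_mul, ← mul_inv,
    Real.mul_self_sqrt zero_le_two]
  rw [integral_indicator_const _ ((measurableSet_tile a).inter (measurableSet_tile a')),
    smul_eq_mul, div_eq_mul_inv]

lemma volume_Icc_inter_Icc_intCast_mul {d : ℝ} (hd : 0 ≤ d) {n : ℤ} (hn : n ≠ 0) :
    volume (Icc 0 d ∩ Icc (n * d) (n * d + d)) = 0 := by
  rw [Icc_inter_Icc, Real.volume_Icc, ENNReal.ofReal_eq_zero]
  rcases hn.lt_or_gt with hneg | hpos
  · have : (n : ℝ) + 1 ≤ 0 := by exact_mod_cast hneg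
    nlinarith [min_le_right d (n * d + d), le_max_left 0 (n * d)]
  · have : (1 : ℝ) ≤ n := by exact_mod_cast hpos
    nlinarith [min_le_left d (n * d + d), le_max_right 0 (n * d)]

lemma volume_tile_inter_tile_eq_zero {k l m k' l' m' : ℤ} (h : ¬(k = k' ∧ l = l' ∧ m = m')) :
    volume (tile ((2 * k : ℝ), (l : ℝ), (m : ℝ)) ∩ tile ((2 * k' : ℝ), (l' : ℝ), (m' : ℝ))) =
      0 := by
  set a : ℝ × ℝ × ℝ := ((2 * k : ℝ), (l : ℝ), (m : ℝ)) with ha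
  suffices ∃ S, volume S = 0 ∧
      tile a ∩ tile ((2 * k' : ℝ), (l' : ℝ), (m' : ℝ)) ⊆ (Hmul (Hinv a) ·) ⁻¹' S by
    obtain ⟨S, hS, hsub⟩ := this
    exact measure_mono_null hsub
      ((measurePreserving_hmul_hinv a).quasiMeasurePreserving.preimage_null hS)
  simp only [ha, subset_def, mem_inter_iff, mem_tile_iff, mem_preimage, hmul_hinv_apply, mem_Icc]
  by_cases hk : k = k'
  · subst hk
    by_cases hl : l = l'
    · subst hl
      have hm : m' - m ≠ 0 := sub_ne_zero.mpr (Ne.symm fun hm => h ⟨rfl, rfl, hm⟩)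
      refine ⟨univ ×ˢ univ ×ˢ (Icc 0 1 ∩ Icc (((m' - m : ℤ) : ℝ) * 1) ((m' - m : ℤ) * 1 + 1)),
        ?_, ?_⟩
      · simp only [Measure.volume_eq_prod, Measure.prod_prod,
          volume_Icc_inter_Icc_intCast_mul zero_le_one hm, mul_zero]
      · intro p hp
        simp only [mem_prod, mem_univ, mem_inter_iff, mem_Icc, true_and]
        push_cast
        refine ⟨⟨?_, ?_⟩, ?_, ?_⟩ <;> linarith
    · have hl : l' - l ≠ 0 := sub_ne_zero.mpr (Ne.symm hl)
      refine ⟨univ ×ˢ (Icc 0 1 ∩ Icc (((l' - l : ℤ) : ℝ) * 1) ((l' - l : ℤ) * 1 + 1)) ×ˢ univ,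
        ?_, ?_⟩
      · simp only [Measure.volume_eq_prod, Measure.prod_prod,
          volume_Icc_inter_Icc_intCast_mul zero_le_one hl, zero_mul, mul_zero]
      · intro p hp
        simp only [mem_prod, mem_univ, mem_inter_iff, mem_Icc, true_and, and_true]
        push_cast
        refine ⟨⟨?_, ?_⟩, ?_, ?_⟩ <;> linarith
  · have hk : k' - k ≠ 0 := sub_ne_zero.mpr (Ne.symm hk)
    refine ⟨(Icc 0 2 ∩ Icc (((k' - k : ℤ) : ℝ) * 2) ((k' - k : ℤ) * 2 + 2)) ×ˢ univ, ?_, ?_⟩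
    · simp only [Measure.volume_eq_prod, Measure.prod_prod,
        volume_Icc_inter_Icc_intCast_mul zero_le_two hk, zero_mul]
    · intro p hp
      simp only [mem_prod, mem_univ, mem_inter_iff, mem_Icc, and_true]
      push_cast
      refine ⟨⟨?_, ?_⟩, ?_, ?_⟩ <;> linarith

theorem translates_phi_one_orthonormal (k l m k' l' m' : ℤ) :
    ∫ p : ℝ × ℝ × ℝ,
        Ltr ((2 * k : ℝ), (l : ℝ), (m : ℝ)) (phi 1) p *
          Ltr ((2 * k' : ℝ), (l' : ℝ), (m' : ℝ)) (phi 1) p =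
      if k = k' ∧ l = l' ∧ m = m' then 1 else 0 := by
  rw [integral_Ltr_phi_one_mul]
  split_ifs with h
  · obtain ⟨rfl, rfl, rfl⟩ := h
    rw [inter_self, measureReal_tile]
    norm_num
  · rw [measureReal_def, volume_tile_inter_tile_eq_zero h]
    simp
end
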